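/- (i) For any ordered pair (ℓ1, ℓ2) of intersecting lines of A_H with ℓ1 ∈ NBF and ℓ2 ∈ BF, and any point A1 on ℓ1 not on ℓ2, there exists a collineation φ of A_H such that φ(ℓ1) is the line y = x·(0,1), φ(ℓ2) is the vertical line x = (0,0), and φ(A1) = ((0,1), (s, r)). (ii) For any ordered pair (ℓ1, ℓ2) of intersecting lines of A_H with ℓ1 ∈ BF and ℓ2 ∈ NBF, and any point A1 on ℓ1 not on ℓ2, there exists a collineation φ of A_H such that φ(ℓ1) is the vertical line x = (0,0), φ(ℓ2) is the line y = x·(0,1), and φ(A1) = ((0,0), (0,1)). -/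

import Mathlib

open Polynomial

/-- The Hall system multiplication on `F × F`, with defining polynomial `x^2 - r*x - s`. -/
def hallMul {F : Type*} [Field F] [DecidableEq F] (r s : F) (a b : F × F) : F × F :=
  if b.2 = 0 then (a.1 * b.1, a.2 * b.1)
  else (a.1 * b.1 - a.2 * b.2⁻¹ * (b.1 ^ 2 - r * b.1 - s),
        a.1 * b.2 - a.2 * b.1 + a.2 * r)

/-- Vertical line `[c] = {(c, y)}` in the Hall affine plane. -/
def vertLine {F : Type*} (c : F × F) : Set ((F × F) × (F × F)) := {P | P.1 = c}

/-- Non-vertical line `[m, k] = {(x, x·m + k)}` in the Hall affine plane. -/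
def slopeLine {F : Type*} [Field F] [DecidableEq F] (r s : F) (m k : F × F) :
    Set ((F × F) × (F × F)) :=
  {P | P.2 = hallMul r s P.1 m + k}

/-- The lines of the Hall affine plane `A_H`. -/
def IsHallLine {F : Type*} [Field F] [DecidableEq F] (r s : F)
    (ℓ : Set ((F × F) × (F × F))) : Prop :=
  (∃ c : F × F, ℓ = vertLine c) ∨ ∃ m k : F × F, ℓ = slopeLine r s m k

/-- A collineation of the Hall affine plane: a bijection of the point set mapping
every line onto a line. -/
def IsCollineation {F : Type*} [Field F] [DecidableEq F] (r s : F)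
    (φ : (F × F) × (F × F) → (F × F) × (F × F)) : Prop :=
  Function.Bijective φ ∧ ∀ ℓ, IsHallLine r s ℓ → IsHallLine r s (φ '' ℓ)

/-- The BF lines: vertical lines and type 1 lines (slope in the basefield). -/
def BFlines {F : Type*} [Field F] [DecidableEq F] (r s : F) :
    Set (Set ((F × F) × (F × F))) :=
  {ℓ | (∃ c : F × F, ℓ = vertLine c) ∨ ∃ m k : F × F, m.2 = 0 ∧ ℓ = slopeLine r s m k}

/-- The NBF lines: type 2 lines (slope not in the basefield). -/
def NBFlines {F : Type*} [Field F] [DecidableEq F] (r s : F) :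
    Set (Set ((F × F) × (F × F))) :=
  {ℓ | ∃ m k : F × F, m.2 ≠ 0 ∧ ℓ = slopeLine r s m k}

/-!
Translations are collineations, and for `m.2 ≠ 0` the map `x ↦ x·m` is an `F`-linear map of
`F × F` satisfying `X² = rX + s`. Conversely, since `f` has no root in `F`, every linear map
satisfying this relation is `x ↦ x·n` for some `n` with `n.2 ≠ 0`. Hence, for every linear
automorphism `e`, the map `(x, y) ↦ (e x, e y)` is a collineation: it conjugates slopes to
slopes. So are the maps `Λ_{a,b}`, which fix every NBF line through the origin.

Translate the common point of the two lines to the origin; if the BF line is not vertical, say of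
slope `(n, 0)`, then `Λ_{-n,1}` makes it vertical. The marked point is now `(u, u·m)` or `(0, u)`
with `u ≠ 0`. As `u` is not an eigenvector of `x ↦ x·m`, the linear map `e` with `e u = (0, 1)`
and `e (u·m) = (s, r)` exists, and it conjugates `x ↦ x·m` to `x ↦ x·(0, 1)`.
-/

namespace Hall

@[simp]
theorem mem_vertLine {F : Type*} {c : F × F} {P : (F × F) × (F × F)} :
    P ∈ vertLine c ↔ P.1 = c := Iff.rfl

section AddGroup

variable {F : Type*} [AddGroup F]

theorem image_add_right_vertLine (v : (F × F) × (F × F)) (c : F × F) :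
    (· + v) '' vertLine c = vertLine (c + v.1) := by
  ext P
  simp [Set.image_add_right, ← sub_eq_add_neg, sub_eq_iff_eq_add]

theorem image_add_neg_vertLine {c : F × F} {P : (F × F) × (F × F)} (hP : P ∈ vertLine c) :
    (· + -P) '' vertLine c = vertLine 0 := by
  rw [image_add_right_vertLine, Prod.fst_neg, mem_vertLine.1 hP, add_neg_cancel]

end AddGroup

variable {F : Type*} [Field F]

theorem sq_sub_mul_sub_ne_zero {r s : F} (hirr : Irreducible (X ^ 2 - C r * X - C s : F[X]))
    (c : F) : c ^ 2 - r * c - s ≠ 0 := by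
  have hdeg : (X ^ 2 - C r * X - C s : F[X]).natDegree = 2 := by compute_degree!
  intro hc
  exact hirr.not_isRoot_of_natDegree_ne_one (by omega) (x := c) (by simpa using hc)

theorem image_prodMap_vertLine_zero (e : (F × F) ≃ₗ[F] (F × F)) :
    Prod.map e e '' vertLine 0 = vertLine 0 := by
  ext ⟨x, y⟩
  constructor
  · rintro ⟨⟨x', y'⟩, (rfl : x' = 0), h⟩
    simp only [Prod.map, Prod.mk.injEq, map_zero] at h
    exact h.1.symm
  · rintro (rfl : x = 0)
    exact ⟨(0, e.symm y), rfl, by simp⟩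

/-- The paper's `Λ_{a,b}`. The determinant `a² + abr - b²s` is the norm of `a + bω`, for `ω` a
root of `f`. -/
def lambdaMap (r s a b : F) (P : (F × F) × (F × F)) : (F × F) × (F × F) :=
  (a • P.1 + b • P.2, (b * s) • P.1 + (a + b * r) • P.2)

theorem lambdaMap_injective {r s a b : F} (hd : a ^ 2 + a * b * r - b ^ 2 * s ≠ 0) :
    (lambdaMap r s a b).Injective := by
  intro P Q h
  obtain ⟨h1, h2⟩ := Prod.mk.injEq _ _ _ _ ▸ h
  have h1' : (a ^ 2 + a * b * r - b ^ 2 * s) • (P.1 - Q.1) = 0 := by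
    linear_combination (norm := module) (a + b * r) • h1 - b • h2
  have h2' : (a ^ 2 + a * b * r - b ^ 2 * s) • (P.2 - Q.2) = 0 := by
    linear_combination (norm := module) a • h2 - (b * s) • h1
  exact Prod.ext (sub_eq_zero.1 ((smul_eq_zero.1 h1').resolve_left hd))
    (sub_eq_zero.1 ((smul_eq_zero.1 h2').resolve_left hd))

variable [DecidableEq F] {r s : F}

theorem hallMul_of_snd_eq_zero (x : F × F) (n : F) : hallMul r s x (n, 0) = n • x := by
  ext <;> simp [hallMul, mul_comm]

theorem hallMul_zero_one (x : F × F) : hallMul r s x (0, 1) = (s * x.2, x.1 + r * x.2) := by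
  ext <;> simp [hallMul] <;> ring

theorem hallMul_add_left (x y m : F × F) :
    hallMul r s (x + y) m = hallMul r s x m + hallMul r s y m := by
  unfold hallMul
  split_ifs <;> ext <;> simp <;> ring

theorem hallMul_smul_left (c : F) (x m : F × F) :
    hallMul r s (c • x) m = c • hallMul r s x m := by
  unfold hallMul
  split_ifs <;> ext <;> simp <;> ring

variable (r s) in
def hallMulRight (m : F × F) : F × F →ₗ[F] F × F where
  toFun x := hallMul r s x m
  map_add' x y := hallMul_add_left x y m
  map_smul' c x := hallMul_smul_left c x m

@[simp]
theorem hallMulRight_apply (m x : F × F) : hallMulRight r s m x = hallMul r s x m := rfl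

@[simp]
theorem hallMul_zero_left (m : F × F) : hallMul r s 0 m = 0 := map_zero (hallMulRight r s m)

theorem hallMul_neg_left (x m : F × F) : hallMul r s (-x) m = -hallMul r s x m :=
  map_neg (hallMulRight r s m) x

theorem hallMul_sub_left (x y m : F × F) :
    hallMul r s (x - y) m = hallMul r s x m - hallMul r s y m :=
  map_sub (hallMulRight r s m) x y

theorem hallMul_hallMul {m : F × F} (hm : m.2 ≠ 0) (x : F × F) :
    hallMul r s (hallMul r s x m) m = r • hallMul r s x m + s • x := by
  simp only [hallMul, if_neg hm]
  ext <;> simp <;> field_simp <;> ring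

section NoRoot

variable (hf : ∀ c : F, c ^ 2 - r * c - s ≠ 0)
include hf

theorem exists_eq_hallMul_of_apply_apply (L : F × F →ₗ[F] F × F)
    (hL : ∀ x, L (L x) = r • L x + s • x) :
    ∃ n : F × F, n.2 ≠ 0 ∧ ∀ x, L x = hallMul r s x n := by
  have hdecomp : ∀ x : F × F, L x = x.1 • L (1, 0) + x.2 • L (0, 1) := fun x => by
    rw [← map_smul, ← map_smul, ← map_add]
    congr 1
    ext <;> simp
  set n := L (1, 0)
  set c := L (0, 1)
  have hn := hL (1, 0)
  rw [hdecomp n] at hn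
  simp only [Prod.ext_iff, Prod.fst_add, Prod.snd_add, Prod.smul_fst, Prod.smul_snd,
    smul_eq_mul] at hn
  obtain ⟨hn1, hn2⟩ := hn
  have hn0 : n.2 ≠ 0 := fun h0 => hf n.1 (by simp [h0] at hn1; linear_combination hn1)
  have hc2 : c.2 = r - n.1 := mul_left_cancel₀ hn0 (by linear_combination hn2)
  refine ⟨n, hn0, fun x => ?_⟩
  rw [hdecomp x]
  simp only [hallMul, if_neg hn0]
  ext <;> simp [hc2]
  · field_simp
    linear_combination x.2 * hn1
  · ring

theorem exists_hallMul_conj (e : (F × F) ≃ₗ[F] (F × F)) {m : F × F} (hm : m.2 ≠ 0) :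
    ∃ n : F × F, n.2 ≠ 0 ∧ ∀ x, e (hallMul r s x m) = hallMul r s (e x) n := by
  let L : F × F →ₗ[F] F × F :=
    e.toLinearMap ∘ₗ hallMulRight r s m ∘ₗ e.symm.toLinearMap
  obtain ⟨n, hn, hLn⟩ := exists_eq_hallMul_of_apply_apply hf L fun x => by
    simp [L, hallMul_hallMul hm]
  exact ⟨n, hn, fun x => by simpa [L] using hLn (e x)⟩

theorem linearIndependent_hallMul {m u : F × F} (hm : m.2 ≠ 0) (hu : u ≠ 0) :
    LinearIndependent F ![u, hallMul r s u m] := by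
  rw [LinearIndependent.pair_iff]
  intro a b hab
  have habm : (b * s) • u + (a + b * r) • hallMul r s u m = 0 := by
    have := congrArg (hallMulRight r s m) hab
    simp only [map_add, map_smul, map_zero, hallMulRight_apply, hallMul_hallMul hm] at this
    linear_combination (norm := module) this
  have hnorm : (a ^ 2 + a * b * r - b ^ 2 * s) • u = 0 := by
    linear_combination (norm := module) (a + b * r) • hab - b • habm
  have hnorm' := (smul_eq_zero.1 hnorm).resolve_right hu
  obtain rfl : b = 0 := by
    by_contra hb
    exact hf (-a / b) (by field_simp; linear_combination hnorm')
  exact ⟨by simpa [hu] using hab, rfl⟩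

theorem exists_linearEquiv_hallMul_zero_one {m u : F × F} (hm : m.2 ≠ 0) (hu : u ≠ 0) :
    ∃ e : (F × F) ≃ₗ[F] (F × F),
      e u = (0, 1) ∧ ∀ x, e (hallMul r s x m) = hallMul r s (e x) (0, 1) := by
  have hs : s ≠ 0 := by simpa using hf 0
  -- `e⁻¹` will be `x ↦ x.1 • w + x.2 • u`; this `w` makes it send `(s, r)` to `u·m`.
  set w := s⁻¹ • (hallMul r s u m - r • u) with hw
  have hsw : s • w = hallMul r s u m - r • u := by
    rw [hw, smul_smul, mul_inv_cancel₀ hs, one_smul]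
  have hwm : hallMul r s w m = u := by
    rw [hw, hallMul_smul_left, hallMul_sub_left, hallMul_smul_left, hallMul_hallMul hm,
      add_sub_cancel_left, smul_smul, inv_mul_cancel₀ hs, one_smul]
  let Q : F × F →ₗ[F] F × F :=
    (LinearMap.fst F F F).smulRight w + (LinearMap.snd F F F).smulRight u
  have hQ : ∀ x, Q x = x.1 • w + x.2 • u := fun x => rfl
  have hQinj : Function.Injective Q := by
    refine (injective_iff_map_eq_zero Q).2 fun x hx => ?_
    rw [hQ] at hx
    obtain ⟨h1, h2⟩ := LinearIndependent.pair_iff.1 (linearIndependent_hallMul hf hm hu)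
      (s * x.2 - r * x.1) x.1 (by linear_combination (norm := module) s • hx - x.1 • hsw)
    exact Prod.ext h2 (by simpa [h2, hs] using h1)
  have hQm : ∀ x, Q (hallMul r s x (0, 1)) = hallMul r s (Q x) m := fun x => by
    simp only [hallMul_zero_one, hQ, hallMul_add_left, hallMul_smul_left, hwm]
    linear_combination (norm := module) x.2 • hsw
  let E := LinearEquiv.ofInjectiveEndo Q hQinj
  refine ⟨E.symm, E.symm_apply_eq.2 (by simp [E, hQ]), fun x => E.symm_apply_eq.2 ?_⟩
  simp only [E, LinearEquiv.coe_ofInjectiveEndo, hQm]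
  rw [← LinearEquiv.coe_ofInjectiveEndo Q hQinj, LinearEquiv.apply_symm_apply]

end NoRoot

@[simp]
theorem mem_slopeLine {m k : F × F} {P : (F × F) × (F × F)} :
    P ∈ slopeLine r s m k ↔ P.2 = hallMul r s P.1 m + k := Iff.rfl

theorem _root_.IsHallLine.ncard_eq {ℓ : Set ((F × F) × (F × F))} (hℓ : IsHallLine r s ℓ) :
    ℓ.ncard = Nat.card (F × F) := by
  rcases hℓ with ⟨c, rfl⟩ | ⟨m, k, rfl⟩
  · have : vertLine c = Set.range fun y : F × F => (c, y) := by
      ext P; simp [eq_comm, Prod.ext_iff]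
    rw [this, Set.ncard_range_of_injective fun _ _ h => (Prod.ext_iff.1 h).2]
  · have : slopeLine r s m k = Set.range fun x : F × F => (x, hallMul r s x m + k) := by
      ext P; simp [eq_comm, Prod.ext_iff]
    rw [this, Set.ncard_range_of_injective fun _ _ h => (Prod.ext_iff.1 h).1]

theorem image_eq_of_mapsTo [Finite F] {φ : (F × F) × (F × F) → (F × F) × (F × F)}
    (hφ : φ.Injective) {ℓ ℓ' : Set ((F × F) × (F × F))} (hℓ : IsHallLine r s ℓ)
    (hℓ' : IsHallLine r s ℓ') (h : Set.MapsTo φ ℓ ℓ') : φ '' ℓ = ℓ' :=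
  Set.eq_of_subset_of_ncard_le h.image_subset
    (by rw [Set.ncard_image_of_injective _ hφ, hℓ.ncard_eq, hℓ'.ncard_eq]) (Set.toFinite _)

theorem _root_.IsCollineation.comp {φ ψ : (F × F) × (F × F) → (F × F) × (F × F)}
    (hψ : IsCollineation r s ψ) (hφ : IsCollineation r s φ) : IsCollineation r s (ψ ∘ φ) :=
  ⟨hψ.1.comp hφ.1, fun ℓ hℓ => Set.image_comp ψ φ ℓ ▸ hψ.2 _ (hφ.2 ℓ hℓ)⟩

theorem image_add_right_slopeLine (v : (F × F) × (F × F)) (m k : F × F) :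
    (· + v) '' slopeLine r s m k = slopeLine r s m (k + v.2 - hallMul r s v.1 m) := by
  ext P
  simp only [Set.image_add_right, Set.mem_preimage, mem_slopeLine, ← sub_eq_add_neg,
    Prod.fst_sub, Prod.snd_sub, hallMul_sub_left]
  constructor <;> intro h <;> linear_combination h

theorem image_add_neg_slopeLine {m k : F × F} {P : (F × F) × (F × F)}
    (hP : P ∈ slopeLine r s m k) : (· + -P) '' slopeLine r s m k = slopeLine r s m 0 := by
  rw [image_add_right_slopeLine, Prod.fst_neg, Prod.snd_neg, mem_slopeLine.1 hP,
    hallMul_neg_left]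
  abel_nf

theorem isCollineation_add_right (v : (F × F) × (F × F)) : IsCollineation r s (· + v) := by
  refine ⟨(Equiv.addRight v).bijective, ?_⟩
  rintro ℓ (⟨c, rfl⟩ | ⟨m, k, rfl⟩)
  · exact .inl ⟨_, image_add_right_vertLine v c⟩
  · exact .inr ⟨_, _, image_add_right_slopeLine v m k⟩

theorem isCollineation_of_map_add {φ : (F × F) × (F × F) → (F × F) × (F × F)}
    (hφ : φ.Bijective) (hadd : ∀ P Q, φ (P + Q) = φ P + φ Q)
    (hvert : IsHallLine r s (φ '' vertLine 0))
    (hslope : ∀ m, IsHallLine r s (φ '' slopeLine r s m 0)) : IsCollineation r s φ := by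
  have htrans : ∀ v ℓ, φ '' ((· + v) '' ℓ) = (· + φ v) '' (φ '' ℓ) := fun v ℓ => by
    simp only [Set.image_image, hadd]
  refine ⟨hφ, ?_⟩
  rintro ℓ (⟨c, rfl⟩ | ⟨m, k, rfl⟩)
  · have hc := image_add_right_vertLine ((c, 0) : (F × F) × (F × F)) 0
    rw [zero_add] at hc
    rw [← hc, htrans]
    exact (isCollineation_add_right _).2 _ hvert
  · have hk := image_add_right_slopeLine (r := r) (s := s) ((0, k) : (F × F) × (F × F)) m 0
    simp only [zero_add, hallMul_zero_left, sub_zero] at hk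
    rw [← hk, htrans]
    exact (isCollineation_add_right _).2 _ (hslope m)

variable [Finite F]

section Linear

variable (e : (F × F) ≃ₗ[F] (F × F))

theorem image_prodMap_slopeLine {m n : F × F}
    (h : ∀ x, e (hallMul r s x m) = hallMul r s (e x) n) :
    Prod.map e e '' slopeLine r s m 0 = slopeLine r s n 0 :=
  image_eq_of_mapsTo (e.injective.prodMap e.injective) (.inr ⟨m, 0, rfl⟩) (.inr ⟨n, 0, rfl⟩)
    fun P (hP : P.2 = _) => by simp [hP, h]

theorem isCollineation_prodMap (hf : ∀ c : F, c ^ 2 - r * c - s ≠ 0) :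
    IsCollineation r s (Prod.map e e) := by
  refine isCollineation_of_map_add (e.bijective.prodMap e.bijective)
    (fun P Q => Prod.ext (map_add e _ _) (map_add e _ _))
    (.inl ⟨0, image_prodMap_vertLine_zero e⟩) fun m => ?_
  by_cases hm : m.2 = 0
  · obtain ⟨n, rfl⟩ : ∃ n, m = (n, 0) := ⟨m.1, Prod.ext rfl hm⟩
    exact .inr ⟨_, 0, image_prodMap_slopeLine e (n := (n, 0)) fun x => by
      simp [hallMul_of_snd_eq_zero]⟩
  · obtain ⟨n, -, hn⟩ := exists_hallMul_conj hf e hm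
    exact .inr ⟨n, 0, image_prodMap_slopeLine e hn⟩

end Linear

section Lambda

variable {a b : F} (hd : a ^ 2 + a * b * r - b ^ 2 * s ≠ 0)
include hd

theorem image_lambdaMap_slopeLine {m : F × F} (hm : m.2 ≠ 0) :
    lambdaMap r s a b '' slopeLine r s m 0 = slopeLine r s m 0 :=
  image_eq_of_mapsTo (lambdaMap_injective hd) (.inr ⟨m, 0, rfl⟩) (.inr ⟨m, 0, rfl⟩)
    fun P (hP : P.2 = hallMul r s P.1 m + 0) => by
      rw [add_zero] at hP
      simp only [mem_slopeLine, lambdaMap, add_zero, hallMul_add_left, hallMul_smul_left, hP,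
        hallMul_hallMul hm]
      module

theorem image_lambdaMap_slopeLine_of_add_mul_eq_zero {n : F} (hn : a + b * n = 0) :
    lambdaMap r s a b '' slopeLine r s (n, 0) 0 = vertLine 0 :=
  image_eq_of_mapsTo (lambdaMap_injective hd) (.inr ⟨_, 0, rfl⟩) (.inl ⟨0, rfl⟩)
    fun P (hP : P.2 = hallMul r s P.1 (n, 0) + 0) => by
      rw [add_zero, hallMul_of_snd_eq_zero] at hP
      simp only [mem_vertLine, lambdaMap, hP, smul_smul, ← add_smul, hn, zero_smul]

theorem isHallLine_image_lambdaMap_slopeLine_of_snd_eq_zero (n : F) :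
    IsHallLine r s (lambdaMap r s a b '' slopeLine r s (n, 0) 0) := by
  by_cases hn : a + b * n = 0
  · exact .inl ⟨0, image_lambdaMap_slopeLine_of_add_mul_eq_zero hd hn⟩
  refine .inr ⟨((b * s + (a + b * r) * n) / (a + b * n), 0), 0,
    image_eq_of_mapsTo (lambdaMap_injective hd) (.inr ⟨_, 0, rfl⟩) (.inr ⟨_, 0, rfl⟩) ?_⟩
  intro P (hP : P.2 = hallMul r s P.1 (n, 0) + 0)
  rw [add_zero, hallMul_of_snd_eq_zero] at hP
  simp only [mem_slopeLine, lambdaMap, add_zero, hallMul_of_snd_eq_zero, hP, smul_smul,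
    ← add_smul]
  congr 1
  field_simp

theorem isHallLine_image_lambdaMap_vertLine :
    IsHallLine r s (lambdaMap r s a b '' vertLine 0) := by
  by_cases hb : b = 0
  · refine .inl ⟨0, image_eq_of_mapsTo (r := r) (s := s) (lambdaMap_injective hd)
      (.inl ⟨0, rfl⟩) (.inl ⟨0, rfl⟩) ?_⟩
    intro P (hP : P.1 = 0)
    simp [lambdaMap, hP, hb]
  refine .inr ⟨((a + b * r) / b, 0), 0,
    image_eq_of_mapsTo (lambdaMap_injective hd) (.inl ⟨0, rfl⟩) (.inr ⟨_, 0, rfl⟩) ?_⟩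
  intro P (hP : P.1 = 0)
  simp only [mem_slopeLine, lambdaMap, hP, smul_zero, zero_add, add_zero, hallMul_of_snd_eq_zero,
    smul_smul, div_mul_cancel₀ _ hb]

theorem isCollineation_lambdaMap : IsCollineation r s (lambdaMap r s a b) := by
  refine isCollineation_of_map_add (Finite.injective_iff_bijective.1 (lambdaMap_injective hd))
    (fun P Q => by simp only [lambdaMap, Prod.fst_add, Prod.snd_add]; ext <;> simp <;> ring)
    (isHallLine_image_lambdaMap_vertLine hd) fun m => ?_
  by_cases hm : m.2 = 0
  · obtain ⟨n, rfl⟩ : ∃ n, m = (n, 0) := ⟨m.1, Prod.ext rfl hm⟩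
    exact isHallLine_image_lambdaMap_slopeLine_of_snd_eq_zero hd n
  · exact .inr ⟨m, 0, image_lambdaMap_slopeLine hd hm⟩

end Lambda

section Normalization

variable (hf : ∀ c : F, c ^ 2 - r * c - s ≠ 0)
include hf

theorem exists_collineation_nbf_bf {ℓN ℓB : Set ((F × F) × (F × F))}
    (hN : ℓN ∈ NBFlines r s) (hB : ℓB ∈ BFlines r s) (hNB : (ℓN ∩ ℓB).Nonempty) :
    ∃ (ψ : (F × F) × (F × F) → (F × F) × (F × F)) (m : F × F), m.2 ≠ 0 ∧
      IsCollineation r s ψ ∧ ψ '' ℓN = slopeLine r s m 0 ∧ ψ '' ℓB = vertLine 0 := by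
  obtain ⟨m, k, hm, rfl⟩ := hN
  obtain ⟨P, hPN, hPB⟩ := hNB
  have hτN := image_add_neg_slopeLine hPN
  rcases hB with ⟨c, rfl⟩ | ⟨n, k', hn, rfl⟩
  · exact ⟨_, m, hm, isCollineation_add_right (-P), hτN, image_add_neg_vertLine hPB⟩
  obtain ⟨n, rfl⟩ : ∃ n', n = (n', 0) := ⟨n.1, Prod.ext rfl hn⟩
  have hd : (-n) ^ 2 + -n * 1 * r - 1 ^ 2 * s ≠ 0 := by convert hf n using 1; ring
  refine ⟨lambdaMap r s (-n) 1 ∘ (· + -P), m, hm,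
    (isCollineation_lambdaMap hd).comp (isCollineation_add_right _), ?_, ?_⟩
  · rw [Set.image_comp, hτN, image_lambdaMap_slopeLine hd hm]
  · rw [Set.image_comp, image_add_neg_slopeLine hPB,
      image_lambdaMap_slopeLine_of_add_mul_eq_zero hd (by ring)]

theorem exists_collineation_zero_one {m u : F × F} (hm : m.2 ≠ 0) (hu : u ≠ 0) :
    ∃ φ : (F × F) × (F × F) → (F × F) × (F × F), IsCollineation r s φ ∧
      φ '' slopeLine r s m 0 = slopeLine r s (0, 1) 0 ∧ φ '' vertLine 0 = vertLine 0 ∧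
      φ (u, hallMul r s u m) = ((0, 1), (s, r)) ∧ φ (0, u) = ((0, 0), (0, 1)) := by
  obtain ⟨e, heu, he⟩ := exists_linearEquiv_hallMul_zero_one hf hm hu
  refine ⟨Prod.map e e, isCollineation_prodMap e hf, image_prodMap_slopeLine e he,
    image_prodMap_vertLine_zero e, ?_, ?_⟩
  · simp [he, heu, hallMul_zero_one]
  · simp [heu]
    rfl

end Normalization

end Hall

theorem NBF_BF_normalization_general {F : Type*} [Field F] [Fintype F] [DecidableEq F]
    (r s : F)
    (hirr : Irreducible (X ^ 2 - C r * X - C s : F[X])) :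
    (∀ (ℓ1 ℓ2 : Set ((F × F) × (F × F))) (A1 : (F × F) × (F × F)),
      ℓ1 ∈ NBFlines r s → ℓ2 ∈ BFlines r s → (ℓ1 ∩ ℓ2).Nonempty →
      A1 ∈ ℓ1 → A1 ∉ ℓ2 →
      ∃ φ, IsCollineation r s φ ∧
        φ '' ℓ1 = slopeLine r s (0, 1) 0 ∧
        φ '' ℓ2 = vertLine ((0 : F × F)) ∧
        φ A1 = ((0, 1), (s, r))) ∧
    (∀ (ℓ1 ℓ2 : Set ((F × F) × (F × F))) (A1 : (F × F) × (F × F)),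
      ℓ1 ∈ BFlines r s → ℓ2 ∈ NBFlines r s → (ℓ1 ∩ ℓ2).Nonempty →
      A1 ∈ ℓ1 → A1 ∉ ℓ2 →
      ∃ φ, IsCollineation r s φ ∧
        φ '' ℓ1 = vertLine ((0 : F × F)) ∧
        φ '' ℓ2 = slopeLine r s (0, 1) 0 ∧
        φ A1 = ((0, 0), (0, 1))) := by
  have hf := Hall.sq_sub_mul_sub_ne_zero hirr
  refine ⟨fun ℓ1 ℓ2 A1 h1 h2 h12 hA1 hA2 => ?_, fun ℓ1 ℓ2 A1 h1 h2 h12 hA1 hA2 => ?_⟩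
  · obtain ⟨ψ, m, hm, hψ, hψ1, hψ2⟩ := Hall.exists_collineation_nbf_bf hf h1 h2 h12
    have hA1' : ψ A1 ∈ slopeLine r s m 0 := hψ1 ▸ Set.mem_image_of_mem ψ hA1
    have hA2' : (ψ A1).1 ≠ 0 := fun h => hA2 (hψ.1.1.mem_set_image.1 (hψ2 ▸ h))
    obtain ⟨φ, hφ, hφ1, hφ2, hφA, -⟩ := Hall.exists_collineation_zero_one hf hm hA2'
    refine ⟨φ ∘ ψ, hφ.comp hψ, by rw [Set.image_comp, hψ1, hφ1],
      by rw [Set.image_comp, hψ2, hφ2], ?_⟩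
    rw [Function.comp_apply, ← hφA]
    exact congrArg φ (Prod.ext rfl (by simpa using hA1'))
  · obtain ⟨ψ, m, hm, hψ, hψ2, hψ1⟩ :=
      Hall.exists_collineation_nbf_bf hf h2 h1 (Set.inter_comm ℓ1 ℓ2 ▸ h12)
    have hA1' : (ψ A1).1 = 0 := Hall.mem_vertLine.1 (hψ1 ▸ Set.mem_image_of_mem ψ hA1)
    have hA2' : (ψ A1).2 ≠ 0 := fun h =>
      hA2 (hψ.1.1.mem_set_image.1 (hψ2 ▸ by simp [Hall.mem_slopeLine, hA1', h]))
    obtain ⟨φ, hφ, hφ2, hφ1, -, hφA⟩ := Hall.exists_collineation_zero_one hf hm hA2'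
    refine ⟨φ ∘ ψ, hφ.comp hψ, by rw [Set.image_comp, hψ1, hφ1],
      by rw [Set.image_comp, hψ2, hφ2], ?_⟩
    rw [Function.comp_apply, ← hφA]
    exact congrArg φ (Prod.ext hA1' rfl)

/-- Proposition (NBF/BF and BF/NBF): (i) any intersecting pair with the first line in NBF
and the second in BF, with a marked point `A1` on the first line and off the second, can be
mapped by a collineation to `(y = x·(0,1), x = (0,0))` with `A1 ↦ ((0,1),(s,r))`; (ii) any
intersecting pair with the first line in BF and the second in NBF, with a marked point
`A1` on the first line and off the second, can be mapped to `(x = (0,0), y = x·(0,1))`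
with `A1 ↦ ((0,0),(0,1))`. -/
theorem NBF_BF_normalization {F : Type*} [Field F] [Fintype F] [DecidableEq F]
    (q : ℕ) (hq : Fintype.card F = q) (r s : F)
    (hirr : Irreducible (X ^ 2 - C r * X - C s : F[X])) :
    (∀ (ℓ1 ℓ2 : Set ((F × F) × (F × F))) (A1 : (F × F) × (F × F)),
      ℓ1 ∈ NBFlines r s → ℓ2 ∈ BFlines r s → (ℓ1 ∩ ℓ2).Nonempty →
      A1 ∈ ℓ1 → A1 ∉ ℓ2 →
      ∃ φ, IsCollineation r s φ ∧
        φ '' ℓ1 = slopeLine r s (0, 1) 0 ∧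
        φ '' ℓ2 = vertLine ((0 : F × F)) ∧
        φ A1 = ((0, 1), (s, r))) ∧
    (∀ (ℓ1 ℓ2 : Set ((F × F) × (F × F))) (A1 : (F × F) × (F × F)),
      ℓ1 ∈ BFlines r s → ℓ2 ∈ NBFlines r s → (ℓ1 ∩ ℓ2).Nonempty →
      A1 ∈ ℓ1 → A1 ∉ ℓ2 →
      ∃ φ, IsCollineation r s φ ∧
        φ '' ℓ1 = vertLine ((0 : F × F)) ∧
        φ '' ℓ2 = slopeLine r s (0, 1) 0 ∧
        φ A1 = ((0, 0), (0, 1))) :=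
  NBF_BF_normalization_general r s hirr
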